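/- For a plane curve of odd degree d defined by irreducible homogeneous f, the homogeneous ideal of its image under the Veronese embedding is generated by the six quadrics Δ_{ij} together with the three forms F₀, F₁, F₂ of degree (d+1)/2 satisfying θ(Fₙ) = xₙ·f; that is, if G ∈ S is homogeneous with θ(G) ∈ (f), then G ∈ (F₀, F₁, F₂, Δ₀₀, Δ₀₁, Δ₀₂, Δ₁₁, Δ₁₂, Δ₂₂). -/

import Mathlib

/-!
Let `I` be the ideal of the six minors. Using a minor, a monomial of `S` containing two of the
off-diagonal variables `x₀₁, x₀₂, x₁₂` can be traded for one with fewer of them, and a monomial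
with at most one off-diagonal variable is determined by its image under `θ`; hence `ker θ = I`.

Grade `k[x₀,x₁,x₂]` by total degree modulo 2. The image of `θ` is the even part, and `f` is odd.
If `θ(G) = c f`, only the odd part `c₁` of `c` contributes, and `c₁ = ∑ hₙ xₙ` with `hₙ` even,
say `hₙ = θ(Hₙ)`. Then `θ(G - ∑ Hₙ Fₙ) = 0`, so `G - ∑ Hₙ Fₙ ∈ I`.
-/

open MvPolynomial

noncomputable def theta (k : Type*) [CommRing k] :
    MvPolynomial (Fin 6) k →ₐ[k] MvPolynomial (Fin 3) k :=
  MvPolynomial.aeval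
    ![X 0 * X 0, X 0 * X 1, X 0 * X 2, X 1 * X 1, X 1 * X 2, X 2 * X 2]

noncomputable def Delta (k : Type*) [CommRing k] : Fin 6 → MvPolynomial (Fin 6) k :=
  ![X 3 * X 5 - X 4 * X 4,
    X 1 * X 5 - X 4 * X 2,
    X 1 * X 4 - X 2 * X 3,
    X 0 * X 5 - X 2 * X 2,
    X 0 * X 4 - X 2 * X 1,
    X 0 * X 3 - X 1 * X 1]

open Finsupp

theorem Finsupp.weight_one_eq_natCast_degree {σ M : Type*} [AddCommMonoidWithOne M]
    (v : σ →₀ ℕ) : weight (1 : σ → M) v = (v.degree : M) := by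
  simp [weight_apply, degree_apply, Finsupp.sum]

namespace MvPolynomial

variable {σ R M : Type*} [CommSemiring R]

theorem IsHomogeneous.isWeightedHomogeneous_one [AddCommMonoidWithOne M]
    {φ : MvPolynomial σ R} {n : ℕ} (hφ : φ.IsHomogeneous n) :
    IsWeightedHomogeneous (1 : σ → M) φ n := by
  intro v hv
  rw [weight_one_eq_natCast_degree, degree_eq_weight_one]
  exact congrArg _ (hφ hv)

theorem IsWeightedHomogeneous.weightedHomogeneousComponent_add_mul [AddCancelCommMonoid M]
    {w : σ → M} {φ : MvPolynomial σ R} {m : M} (hφ : IsWeightedHomogeneous w φ m)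
    (ψ : MvPolynomial σ R) (n : M) :
    weightedHomogeneousComponent w (m + n) (φ * ψ) = φ * weightedHomogeneousComponent w n ψ := by
  classical
  let := weightedGradedAlgebra R w
  rw [← weightedDecomposition.decompose'_apply, ← weightedDecomposition.decompose'_apply]
  exact DirectSum.coe_decompose_mul_add_of_left_mem (weightedHomogeneousSubmodule R w) hφ

theorem IsWeightedHomogeneous.weightedHomogeneousComponent_mul_add [AddCancelCommMonoid M]
    {w : σ → M} {ψ : MvPolynomial σ R} {n : M} (hψ : IsWeightedHomogeneous w ψ n)
    (φ : MvPolynomial σ R) (m : M) :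
    weightedHomogeneousComponent w (m + n) (φ * ψ) = weightedHomogeneousComponent w m φ * ψ := by
  rw [mul_comm, add_comm, hψ.weightedHomogeneousComponent_add_mul, mul_comm]

theorem exists_eq_sum_mul_X_of_isWeightedHomogeneous_one [Fintype σ] [AddCancelCommMonoid M]
    [One M] [NeZero (1 : M)] {p : MvPolynomial σ R} (hp : IsWeightedHomogeneous (1 : σ → M) p 1) :
    ∃ h : σ → MvPolynomial σ R,
      (∀ i, IsWeightedHomogeneous (1 : σ → M) (h i) 0) ∧ p = ∑ i, h i * X i := by
  have hmem : p ∈ Ideal.span (Set.range X) := by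
    rw [← Set.image_univ, mem_ideal_span_X_image]
    intro m hm
    by_contra! hm0
    have : m = 0 := Finsupp.ext fun i => hm0 i (Set.mem_univ i)
    exact one_ne_zero ((hp (MvPolynomial.mem_support_iff.mp hm)).symm.trans (by rw [this, map_zero]))
  obtain ⟨h, rfl⟩ := Ideal.mem_span_range_iff_exists_fun.mp hmem
  refine ⟨fun i => weightedHomogeneousComponent 1 0 (h i),
    fun i => weightedHomogeneousComponent_isWeightedHomogeneous 0 (h i), ?_⟩
  rw [← hp.weightedHomogeneousComponent_same, map_sum]
  refine Finset.sum_congr rfl fun i _ => ?_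
  rw [← (isWeightedHomogeneous_X R 1 i).weightedHomogeneousComponent_mul_add (h i) 0]
  simp

end MvPolynomial

namespace Veronese

noncomputable def thetaExp (e : Fin 6 →₀ ℕ) : Fin 3 →₀ ℕ :=
  equivFunOnFinite.symm ![2 * e 0 + e 1 + e 2, e 1 + 2 * e 3 + e 4, e 2 + e 4 + 2 * e 5]

/-- For `v` of even degree, the exponent over `v` with at most one off-diagonal variable. -/
noncomputable def normalExp (v : Fin 3 →₀ ℕ) : Fin 6 →₀ ℕ :=
  equivFunOnFinite.symm
    ![v 0 / 2, if v 0 % 2 = 1 ∧ v 1 % 2 = 1 then 1 else 0,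
      if v 0 % 2 = 1 ∧ v 1 % 2 = 0 then 1 else 0, v 1 / 2,
      if v 0 % 2 = 0 ∧ v 1 % 2 = 1 then 1 else 0, v 2 / 2]

/-- The variables `x₀₀, x₀₁, x₀₂, x₁₁, x₁₂, x₂₂` of `S` are `X 0, …, X 5`. -/
def offDiag (e : Fin 6 →₀ ℕ) : ℕ := e 1 + e 2 + e 4

theorem thetaExp_normalExp {v : Fin 3 →₀ ℕ} (hv : Even v.degree) :
    thetaExp (normalExp v) = v := by
  rw [degree_eq_sum, Fin.sum_univ_three, Nat.even_iff] at hv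
  ext i
  fin_cases i <;> simp [thetaExp, normalExp] <;> split_ifs <;> omega

theorem normalExp_thetaExp {e : Fin 6 →₀ ℕ} (he : offDiag e ≤ 1) :
    normalExp (thetaExp e) = e := by
  unfold offDiag at he
  ext i
  fin_cases i <;> simp [thetaExp, normalExp] <;> (try split_ifs) <;> omega

variable {k : Type*} [CommRing k]

theorem theta_monomial (e : Fin 6 →₀ ℕ) (r : k) :
    theta k (monomial e r) = monomial (thetaExp e) r := by
  simp [theta, monomial_eq, Finsupp.prod_fintype, Fin.prod_univ_six, Fin.prod_univ_three, thetaExp]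
  ring

theorem isWeightedHomogeneous_theta (G : MvPolynomial (Fin 6) k) :
    IsWeightedHomogeneous (1 : Fin 3 → ZMod 2) (theta k G) 0 := by
  induction G using MvPolynomial.induction_on' with
  | monomial e r =>
    rw [theta_monomial]
    refine isWeightedHomogeneous_monomial _ _ _ ?_
    rw [weight_one_eq_natCast_degree, ZMod.natCast_eq_zero_iff_even, degree_eq_sum,
      Fin.sum_univ_three]
    exact ⟨e 0 + e 1 + e 2 + e 3 + e 4 + e 5, by simp [thetaExp]; ring⟩
  | add p q hp hq => rw [map_add]; exact hp.add hq

noncomputable def thetaSection : MvPolynomial (Fin 3) k →ₗ[k] MvPolynomial (Fin 6) k :=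
  AddMonoidAlgebra.mapDomainLinearMap k k normalExp

theorem thetaSection_monomial (v : Fin 3 →₀ ℕ) (r : k) :
    thetaSection (monomial v r) = monomial (normalExp v) r :=
  AddMonoidAlgebra.mapDomainLinearMap_single _ _ _

theorem theta_thetaSection {p : MvPolynomial (Fin 3) k}
    (hp : IsWeightedHomogeneous (1 : Fin 3 → ZMod 2) p 0) : theta k (thetaSection p) = p := by
  nth_rewrite 1 [← p.support_sum_monomial_coeff]
  conv_rhs => rw [← p.support_sum_monomial_coeff]
  rw [map_sum, map_sum]
  refine Finset.sum_congr rfl fun v hv => ?_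
  have hv : Even v.degree := by
    rw [← ZMod.natCast_eq_zero_iff_even, ← weight_one_eq_natCast_degree]
    exact hp (MvPolynomial.mem_support_iff.mp hv)
  rw [thetaSection_monomial, theta_monomial, thetaExp_normalExp hv]

theorem theta_Delta (j : Fin 6) : theta k (Delta k j) = 0 := by
  fin_cases j <;> simp [theta, Delta] <;> ring

theorem exists_exchange (e : Fin 6 →₀ ℕ) (he : 2 ≤ offDiag e) :
    ∃ p q : Fin 6 →₀ ℕ, p ≤ e ∧ offDiag q < offDiag p ∧
      monomial p (1 : k) - monomial q 1 ∈ Ideal.span (Set.range (Delta k)) := by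
  have exchange (a b c d j : Fin 6) (hle : single a 1 + single b 1 ≤ e)
      (hlt : offDiag (single c 1 + single d 1) < offDiag (single a 1 + single b 1))
      (hΔ : X a * X b - X c * X d = Delta k j ∨ X a * X b - X c * X d = -Delta k j) :
      ∃ p q : Fin 6 →₀ ℕ, p ≤ e ∧ offDiag q < offDiag p ∧
        monomial p (1 : k) - monomial q 1 ∈ Ideal.span (Set.range (Delta k)) := by
    refine ⟨_, _, hle, hlt, ?_⟩
    have hX (a b : Fin 6) : monomial (single a 1 + single b 1) (1 : k) = X a * X b := by
      rw [X, X, monomial_mul, one_mul]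
    rw [hX, hX]
    rcases hΔ with h | h <;> rw [h]
    · exact Ideal.subset_span ⟨j, rfl⟩
    · exact neg_mem (Ideal.subset_span ⟨j, rfl⟩)
  unfold offDiag at he
  by_cases h11 : 2 ≤ e 1
  · exact exchange 1 1 0 3 5 (by intro i; fin_cases i <;> simp [h11]) (by simp [offDiag])
      (.inr (by simp [Delta, mul_comm]))
  by_cases h22 : 2 ≤ e 2
  · exact exchange 2 2 0 5 3 (by intro i; fin_cases i <;> simp [h22]) (by simp [offDiag])
      (.inr (by simp [Delta, mul_comm]))
  by_cases h44 : 2 ≤ e 4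
  · exact exchange 4 4 3 5 0 (by intro i; fin_cases i <;> simp [h44]) (by simp [offDiag])
      (.inr (by simp [Delta, mul_comm]))
  by_cases h12 : 1 ≤ e 1 ∧ 1 ≤ e 2
  · exact exchange 1 2 0 4 4 (by intro i; fin_cases i <;> simp [h12]) (by simp [offDiag])
      (.inr (by simp [Delta, mul_comm]))
  by_cases h14 : 1 ≤ e 1 ∧ 1 ≤ e 4
  · exact exchange 1 4 2 3 2 (by intro i; fin_cases i <;> simp [h14]) (by simp [offDiag])
      (.inl (by simp [Delta, mul_comm]))
  · have h24 : 1 ≤ e 2 ∧ 1 ≤ e 4 := by omega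
    exact exchange 2 4 1 5 1 (by intro i; fin_cases i <;> simp [h24]) (by simp [offDiag])
      (.inr (by simp [Delta, mul_comm]))

theorem span_Delta_le_ker_theta : Ideal.span (Set.range (Delta k)) ≤ RingHom.ker (theta k) :=
  Ideal.span_le.mpr (Set.range_subset_iff.mpr theta_Delta)

theorem monomial_sub_thetaSection_theta_mem (e : Fin 6 →₀ ℕ) :
    monomial e (1 : k) - thetaSection (theta k (monomial e 1)) ∈
      Ideal.span (Set.range (Delta k)) := by
  induction h : offDiag e using Nat.strong_induction_on generalizing e with
  | _ n ih =>
  rw [theta_monomial, thetaSection_monomial]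
  by_cases he : offDiag e ≤ 1
  · rw [normalExp_thetaExp he, sub_self]
    exact zero_mem _
  obtain ⟨p, q, hpe, hqp, hpq⟩ := exists_exchange (k := k) e (by omega)
  have hstep : monomial e (1 : k) - monomial (e - p + q) 1 ∈ Ideal.span (Set.range (Delta k)) := by
    have : monomial e (1 : k) - monomial (e - p + q) 1 =
        monomial (e - p) 1 * (monomial p 1 - monomial q 1) := by
      rw [mul_sub, monomial_mul, monomial_mul, one_mul, tsub_add_cancel_of_le hpe]
    exact this ▸ Ideal.mul_mem_left _ _ hpq
  have hlt : offDiag (e - p + q) < n := by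
    have hpe' : p 1 ≤ e 1 ∧ p 2 ≤ e 2 ∧ p 4 ≤ e 4 := ⟨hpe 1, hpe 2, hpe 4⟩
    simp only [offDiag, Finsupp.add_apply, Finsupp.tsub_apply] at h hqp ⊢
    omega
  have hθ : theta k (monomial (e - p + q) 1) = theta k (monomial e 1) := by
    refine (sub_eq_zero.mp ?_).symm
    rw [← map_sub]
    exact span_Delta_le_ker_theta hstep
  have := ih _ hlt (e - p + q) rfl
  rw [hθ, theta_monomial, thetaSection_monomial] at this
  simpa using add_mem hstep this

theorem sub_thetaSection_theta_mem (G : MvPolynomial (Fin 6) k) :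
    G - thetaSection (theta k G) ∈ Ideal.span (Set.range (Delta k)) := by
  induction G using MvPolynomial.induction_on' with
  | monomial e r =>
    rw [← mul_one r, ← smul_eq_mul, ← smul_monomial, map_smul, map_smul, ← smul_sub,
      smul_eq_C_mul]
    exact Ideal.mul_mem_left _ _ (monomial_sub_thetaSection_theta_mem e)
  | add p q hp hq =>
    rw [map_add, map_add, add_sub_add_comm]
    exact add_mem hp hq

theorem ker_theta : RingHom.ker (theta k) = Ideal.span (Set.range (Delta k)) := by
  refine le_antisymm (fun G hG => ?_) span_Delta_le_ker_theta
  simpa [RingHom.mem_ker.mp hG] using sub_thetaSection_theta_mem G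

end Veronese

open Veronese in
theorem ideal_of_odd_degree_curve_general (k : Type*) [Field k]
    (f : MvPolynomial (Fin 3) k) (d : ℕ) (hd : Odd d)
    (hf : f.IsHomogeneous d)
    (F : Fin 3 → MvPolynomial (Fin 6) k)
    (hθF : ∀ n, theta k (F n) = X n * f)
    (G : MvPolynomial (Fin 6) k)
    (hθG : theta k G ∈ Ideal.span {f}) :
    G ∈ Ideal.span (Set.range F ∪ Set.range (Delta k)) := by
  obtain ⟨c, hc⟩ := Ideal.mem_span_singleton'.mp hθG
  have hf_odd : IsWeightedHomogeneous (1 : Fin 3 → ZMod 2) f 1 :=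
    hd.natCast_zmod_two ▸ hf.isWeightedHomogeneous_one
  obtain ⟨h, hh, hc₁⟩ := exists_eq_sum_mul_X_of_isWeightedHomogeneous_one
    (weightedHomogeneousComponent_isWeightedHomogeneous (w := (1 : Fin 3 → ZMod 2)) 1 c)
  -- in `ZMod 2`, `1 + 1 = 0`: the even part of `c * f` is `c₁ * f`
  have hθG_eq : theta k G = (∑ n, h n * X n) * f := by
    rw [← hc₁, ← hf_odd.weightedHomogeneousComponent_mul_add c 1, hc]
    exact ((isWeightedHomogeneous_theta G).weightedHomogeneousComponent_same).symm
  have hker : G - ∑ n, thetaSection (h n) * F n ∈ Ideal.span (Set.range (Delta k)) := by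
    rw [← ker_theta, RingHom.mem_ker, map_sub, map_sum, hθG_eq, Finset.sum_mul, sub_eq_zero]
    refine Finset.sum_congr rfl fun n _ => ?_
    rw [map_mul, theta_thetaSection (hh n), hθF, mul_assoc]
  rw [← sub_add_cancel G (∑ n, thetaSection (h n) * F n)]
  refine add_mem (Ideal.span_mono Set.subset_union_right hker) (sum_mem fun n _ => ?_)
  exact Ideal.mul_mem_left _ _ (Ideal.subset_span (.inl ⟨n, rfl⟩))

/-- For an irreducible plane curve of odd degree `d`, the homogeneous ideal of its Veronese
image is generated by the six minors together with three forms `F₀,F₁,F₂` of degree `(d+1)/2`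
with `θ(Fₙ) = xₙ·f`. -/
theorem ideal_of_odd_degree_curve (k : Type*) [Field k] [IsAlgClosed k]
    (f : MvPolynomial (Fin 3) k) (d : ℕ) (hd : Odd d) (hfirr : Irreducible f)
    (hf : f.IsHomogeneous d)
    (F : Fin 3 → MvPolynomial (Fin 6) k)
    (hF : ∀ n, (F n).IsHomogeneous ((d + 1) / 2))
    (hθF : ∀ n, theta k (F n) = X n * f)
    (G : MvPolynomial (Fin 6) k) (n' : ℕ) (hG : G.IsHomogeneous n')
    (hθG : theta k G ∈ Ideal.span {f}) :
    G ∈ Ideal.span (Set.range F ∪ Set.range (Delta k)) :=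
  ideal_of_odd_degree_curve_general k f d hd hf F hθF G hθG
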